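/- Let E₀ = [[R₀, p₀],[0, 1]] ∈ SE(n) with R₀ ∈ SO(n) and p₀ ∈ ℝⁿ, and let V = [[Z, v],[0, 0]] with Z ∈ so(n) and v ∈ ℝⁿ. If I − ZᵀZ is positive definite, then, with U = [[√(I − ZᵀZ) − I, 0],[0, 0]], the matrix E₀(I + V + U) lies in SE(n). Moreover, among all matrices U' = [[C, 0],[bᵀ, a]] with C symmetric, I + C positive definite, b ∈ ℝⁿ and a ∈ ℝ, U is the unique one for which E₀(I + V + U') ∈ SE(n); necessarily b = 0, a = 0 and C = √(I − ZᵀZ) − I. -/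

import Mathlib

open Matrix

/-- Membership in `SE(n)`: a real `(n+1)×(n+1)` block matrix of the form
`[[R, p],[0, 1]]` with `R ∈ SO(n)` and `p ∈ ℝⁿ`. -/
def memSE {n : ℕ} (E : Matrix (Fin n ⊕ Fin 1) (Fin n ⊕ Fin 1) ℝ) : Prop :=
  ∃ (R : Matrix (Fin n) (Fin n) ℝ) (p : Matrix (Fin n) (Fin 1) ℝ),
    Rᵀ * R = 1 ∧ R.det = 1 ∧ E = Matrix.fromBlocks R p 0 1

open scoped ComplexOrder in
/-- The positive semidefinite square root of a positive semidefinite matrix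
(Mathlib's former `Matrix.PosSemidef.sqrt`, restated with its old definition). -/
noncomputable def Matrix.PosSemidef.sqrt {n 𝕜 : Type*} [Fintype n] [DecidableEq n] [RCLike 𝕜]
    {A : Matrix n n 𝕜} (hA : A.PosSemidef) : Matrix n n 𝕜 :=
  hA.isHermitian.eigenvectorUnitary.1 * diagonal ((↑) ∘ Real.sqrt ∘ hA.isHermitian.eigenvalues) *
  (star hA.isHermitian.eigenvectorUnitary : Matrix n n 𝕜)

/-!
Write the candidate rotation block as `M + Z` with `M` symmetric. Comparing `(M - Z)(M + Z) = I`
with `(M + Z)(M - Z) = I` shows that `M + Z` is orthogonal exactly when `M² = I - ZᵀZ` and `M`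
commutes with `Z`. The square root `S` of `I - ZᵀZ` commutes with `Z`, being a continuous function
of a matrix that does; and `det (S + Z) > 0`, so `S + Z ∈ SO(n)`. Conversely, if `M = I + C` is
positive definite, `M² = I - ZᵀZ` forces `M = S` by uniqueness of positive square roots, while the
bottom row of an element of `SE(n)` forces `b = 0` and `a = 0`. Left multiplication by `E₀`
plays no role, since it preserves `SE(n)`.
-/

namespace Matrix

section Sqrt

open scoped MatrixOrder ComplexOrder

variable {ι 𝕜 : Type*} [Fintype ι] [DecidableEq ι] [RCLike 𝕜] {A : Matrix ι ι 𝕜}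

lemma PosSemidef.sqrt_eq_cfcSqrt (hA : A.PosSemidef) : hA.sqrt = CFC.sqrt A := by
  rw [CFC.sqrt_eq_cfc, cfc_nnreal_eq_real _ A, hA.1.cfc_eq]
  simp only [IsHermitian.cfc, PosSemidef.sqrt, Unitary.conjStarAlgAut_apply]
  congr 3
  funext i
  simp [Real.coe_sqrt, Real.coe_toNNReal', hA.eigenvalues_nonneg i]

lemma PosSemidef.sqrt_mul_self (hA : A.PosSemidef) : hA.sqrt * hA.sqrt = A := by
  rw [hA.sqrt_eq_cfcSqrt]
  exact CFC.sqrt_mul_sqrt_self A hA.nonneg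

lemma PosDef.posDef_sqrt (hA : A.PosDef) : hA.posSemidef.sqrt.PosDef := by
  rw [hA.posSemidef.sqrt_eq_cfcSqrt]
  exact hA.isStrictlyPositive.sqrt.posDef

lemma PosSemidef.commute_sqrt {B : Matrix ι ι 𝕜} (hA : A.PosSemidef) (hAB : Commute A B) :
    Commute hA.sqrt B := by
  rw [hA.sqrt_eq_cfcSqrt, CFC.sqrt_eq_cfc]
  exact hAB.cfc_nnreal _

lemma PosSemidef.eq_sqrt_of_mul_self_eq {B : Matrix ι ι 𝕜} (hA : A.PosSemidef)
    (hB : B.PosSemidef) (h : B * B = A) : B = hA.sqrt := by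
  rw [hA.sqrt_eq_cfcSqrt, CFC.sqrt_unique h hB.nonneg]

end Sqrt

variable {ι : Type*} [Fintype ι] [DecidableEq ι]

lemma transpose_mul_self_add_eq_one_iff {K : Type*} [Field K] [NeZero (2 : K)]
    {M Z : Matrix ι ι K} (hM : Mᵀ = M) (hZ : Zᵀ = -Z) :
    (M + Z)ᵀ * (M + Z) = 1 ↔ M * M = 1 - Zᵀ * Z ∧ Commute M Z := by
  rw [transpose_add, hM, hZ, ← sub_eq_add_neg, Commute, SemiconjBy]
  constructor
  · intro h
    have h' : (M + Z) * (M - Z) = 1 := mul_eq_one_comm.mp h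
    have hsum : (2 : K) • (M * M - Z * Z) = (2 : K) • 1 :=
      calc (2 : K) • (M * M - Z * Z) = (M - Z) * (M + Z) + (M + Z) * (M - Z) := by
            rw [two_smul]; noncomm_ring
        _ = (2 : K) • 1 := by rw [h, h', two_smul]
    have hdiff : (2 : K) • (M * Z - Z * M) = (2 : K) • 0 :=
      calc (2 : K) • (M * Z - Z * M) = (M - Z) * (M + Z) - (M + Z) * (M - Z) := by
            rw [two_smul]; noncomm_ring
        _ = (2 : K) • 0 := by rw [h, h', sub_self, smul_zero]
    refine ⟨?_, sub_eq_zero.mp (smul_right_injective _ two_ne_zero hdiff)⟩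
    rw [← smul_right_injective _ two_ne_zero hsum]
    noncomm_ring
  · rintro ⟨hMM, hMZ⟩
    calc (M - Z) * (M + Z) = M * M - Z * Z + (M * Z - Z * M) := by noncomm_ring
      _ = 1 := by rw [hMM, hMZ]; noncomm_ring

lemma PosDef.det_add_ne_zero_of_transpose_eq_neg {S Z : Matrix ι ι ℝ} (hS : S.PosDef)
    (hZ : Zᵀ = -Z) : (S + Z).det ≠ 0 := by
  intro hdet
  obtain ⟨x, hx, hker⟩ := exists_mulVec_eq_zero_iff.mpr hdet
  have hskew : x ⬝ᵥ Z *ᵥ x = -(x ⬝ᵥ Z *ᵥ x) := by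
    conv_lhs => rw [dotProduct_mulVec, ← mulVec_transpose, hZ, neg_mulVec, neg_dotProduct,
      dotProduct_comm]
  have hpos : 0 < x ⬝ᵥ S *ᵥ x := by simpa using hS.dotProduct_mulVec_pos hx
  have hzero : x ⬝ᵥ S *ᵥ x + x ⬝ᵥ Z *ᵥ x = 0 := by
    rw [← dotProduct_add, ← add_mulVec, hker, dotProduct_zero]
  linarith

lemma det_eq_one_of_transpose_mul_self_eq_one {R : Matrix ι ι ℝ} (hR : Rᵀ * R = 1)
    (hpos : 0 < R.det) : R.det = 1 := by
  have hsq := congrArg det hR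
  rw [det_mul, det_transpose, det_one] at hsq
  nlinarith

/-- `t ↦ det (S + t • Z)` is continuous, positive at `0`, and never vanishes. -/
lemma PosDef.det_add_pos_of_transpose_eq_neg {S Z : Matrix ι ι ℝ} (hS : S.PosDef)
    (hZ : Zᵀ = -Z) : 0 < (S + Z).det := by
  set f : ℝ → ℝ := fun t => (S + t • Z).det
  have hf : Continuous f := by fun_prop
  have hne (t : ℝ) : f t ≠ 0 :=
    hS.det_add_ne_zero_of_transpose_eq_neg (by rw [transpose_smul, hZ, smul_neg])
  have h0 : 0 < f 0 := by simpa [f] using hS.det_pos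
  by_contra! h1
  obtain ⟨t, -, ht⟩ :=
    intermediate_value_Icc' zero_le_one hf.continuousOn ⟨by simpa [f] using h1, h0.le⟩
  exact hne t ht

lemma one_add_fromBlocks_add_fromBlocks {m l R : Type*} [DecidableEq m] [DecidableEq l]
    [AddCommMonoidWithOne R] (Z C : Matrix m m R) (v : Matrix m l R) (b : Matrix l m R)
    (d : Matrix l l R) :
    1 + fromBlocks Z v 0 0 + fromBlocks C 0 b d = fromBlocks (1 + C + Z) v b (1 + d) := by
  rw [← fromBlocks_one, fromBlocks_add, fromBlocks_add, add_right_comm 1 Z C]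
  simp

end Matrix

section SpecialEuclidean

variable {n : ℕ}

lemma memSE_fromBlocks_iff (A : Matrix (Fin n) (Fin n) ℝ) (B : Matrix (Fin n) (Fin 1) ℝ)
    (C : Matrix (Fin 1) (Fin n) ℝ) (D : Matrix (Fin 1) (Fin 1) ℝ) :
    memSE (fromBlocks A B C D) ↔ Aᵀ * A = 1 ∧ A.det = 1 ∧ C = 0 ∧ D = 1 := by
  constructor
  · rintro ⟨R, p, hR, hdet, h⟩
    obtain ⟨rfl, -, rfl, rfl⟩ := fromBlocks_inj.mp h
    exact ⟨hR, hdet, rfl, rfl⟩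
  · rintro ⟨hA, hdet, rfl, rfl⟩
    exact ⟨A, B, hA, hdet, rfl⟩

lemma memSE_fromBlocks_mul_fromBlocks_iff {R₀ : Matrix (Fin n) (Fin n) ℝ}
    (p₀ : Matrix (Fin n) (Fin 1) ℝ) (hR₀ : R₀ᵀ * R₀ = 1) (hdet : R₀.det = 1)
    (A : Matrix (Fin n) (Fin n) ℝ) (B : Matrix (Fin n) (Fin 1) ℝ)
    (C : Matrix (Fin 1) (Fin n) ℝ) (D : Matrix (Fin 1) (Fin 1) ℝ) :
    memSE (fromBlocks R₀ p₀ 0 1 * fromBlocks A B C D) ↔ memSE (fromBlocks A B C D) := by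
  have hRA : (R₀ * A)ᵀ * (R₀ * A) = Aᵀ * A := by
    rw [transpose_mul, Matrix.mul_assoc, ← Matrix.mul_assoc R₀ᵀ, hR₀, Matrix.one_mul]
  rw [fromBlocks_multiply, memSE_fromBlocks_iff, memSE_fromBlocks_iff]
  simp only [Matrix.zero_mul, Matrix.one_mul, zero_add]
  constructor
  · rintro ⟨hA, hdA, rfl, rfl⟩
    rw [Matrix.mul_zero, add_zero] at hA hdA
    rw [det_mul, hdet, one_mul] at hdA
    exact ⟨hRA ▸ hA, hdA, rfl, rfl⟩
  · rintro ⟨hA, hdA, rfl, rfl⟩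
    rw [Matrix.mul_zero, add_zero, det_mul, hdet, one_mul, hRA]
    exact ⟨hA, hdA, rfl, rfl⟩

end SpecialEuclidean

/-- **TaSP adjustment on `SE(n)`.** For `E₀ = [[R₀, p₀],[0,1]] ∈ SE(n)`,
`V = [[Z, v],[0,0]]` with `Z ∈ so(n)`, `v ∈ ℝⁿ`, and `I - ZᵀZ` positive definite, the
matrix `E₀ (I + V + U)` with `U = [[√(I - ZᵀZ) - I, 0],[0,0]]` lies in `SE(n)`; and `U`
is the unique matrix `U' = [[C, 0],[bᵀ, a]]` with `C` symmetric and `I + C` positive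
definite for which `E₀ (I + V + U') ∈ SE(n)`: necessarily `b = 0`, `a = 0` and
`C = √(I - ZᵀZ) - I`. -/
theorem stmt11 {n : ℕ}
    (R₀ : Matrix (Fin n) (Fin n) ℝ) (p₀ : Matrix (Fin n) (Fin 1) ℝ)
    (hR₀orth : R₀ᵀ * R₀ = 1) (hR₀det : R₀.det = 1)
    (Z : Matrix (Fin n) (Fin n) ℝ) (v : Matrix (Fin n) (Fin 1) ℝ)
    (hZ : Zᵀ = -Z) (hpd : (1 - Zᵀ * Z).PosDef) :
    memSE (Matrix.fromBlocks R₀ p₀ 0 1 *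
        (1 + Matrix.fromBlocks Z v 0 0 + Matrix.fromBlocks ((Matrix.PosSemidef.sqrt hpd.posSemidef) - 1) 0 0 0)) ∧
    (∀ (C : Matrix (Fin n) (Fin n) ℝ) (b : Matrix (Fin 1) (Fin n) ℝ) (a : ℝ),
      Cᵀ = C → (1 + C).PosDef →
      memSE (Matrix.fromBlocks R₀ p₀ 0 1 *
          (1 + Matrix.fromBlocks Z v 0 0 +
            Matrix.fromBlocks C 0 b (Matrix.of fun _ _ => a))) →
      b = 0 ∧ a = 0 ∧ C = (Matrix.PosSemidef.sqrt hpd.posSemidef) - 1) := by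
  set S := hpd.posSemidef.sqrt
  have hS : S.PosDef := hpd.posDef_sqrt
  have hSsymm : Sᵀ = S := hS.isHermitian
  have hSZ : Commute S Z := by
    refine hpd.posSemidef.commute_sqrt ?_
    rw [hZ]
    exact (Commute.one_left Z).sub_left ((Commute.refl Z).neg_left.mul_left (Commute.refl Z))
  have hSZorth : (S + Z)ᵀ * (S + Z) = 1 :=
    (transpose_mul_self_add_eq_one_iff hSsymm hZ).mpr ⟨hpd.posSemidef.sqrt_mul_self, hSZ⟩
  refine ⟨?_, fun C b a hC hCpos hmem => ?_⟩
  · rw [one_add_fromBlocks_add_fromBlocks, memSE_fromBlocks_mul_fromBlocks_iff _ hR₀orth hR₀det,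
      memSE_fromBlocks_iff, add_sub_cancel, add_zero]
    exact ⟨hSZorth, det_eq_one_of_transpose_mul_self_eq_one hSZorth
      (hS.det_add_pos_of_transpose_eq_neg hZ), rfl, rfl⟩
  · rw [one_add_fromBlocks_add_fromBlocks, memSE_fromBlocks_mul_fromBlocks_iff _ hR₀orth hR₀det,
      memSE_fromBlocks_iff] at hmem
    obtain ⟨horth, -, rfl, hD⟩ := hmem
    have hMsymm : (1 + C)ᵀ = 1 + C := by rw [transpose_add, transpose_one, hC]
    obtain ⟨hMM, -⟩ := (transpose_mul_self_add_eq_one_iff hMsymm hZ).mp horth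
    refine ⟨rfl, by simpa using congrFun₂ hD 0 0, ?_⟩
    have hM : 1 + C = S := hpd.posSemidef.eq_sqrt_of_mul_self_eq hCpos.posSemidef hMM
    rw [← hM, add_sub_cancel_left]
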